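/- Let h : {1,…,n} → {1,…,n} be a Hessenberg function, and let R_h be the Hessenberg GKM ring. Then R_h is a ℂ[t_1,…,t_n]-subalgebra of the product ring ∏_{v∈S_n} ℂ[t_1,…,t_n], and the dot action preserves R_h: for every u ∈ S_n and p ∈ R_h, the tuple u·p defined by (u·p)(v) = u(p(u⁻¹v)) again lies in R_h; this defines a left action of S_n on R_h by twisted ℂ[t_1,…,t_n]-algebra automorphisms. -/

import Mathlib

open MvPolynomial Equiv Finset

noncomputable section

/-- The polynomial ring ℂ[t₁,…,tₙ]. -/
abbrev Pol (n : ℕ) : Type := MvPolynomial (Fin n) ℂ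

/-- The action of a permutation `w` on polynomials by the substitution `tᵢ ↦ t_{w(i)}`. -/
def pact {n : ℕ} (w : Perm (Fin n)) (f : Pol n) : Pol n := rename ⇑w f

/-- The GKM condition defining `R ⊆ ∏_{v ∈ Sₙ} ℂ[t₁,…,tₙ]`: for every `v` and every
transposition `(i j)` with `i < j`, the difference `p(v) − p((i j)v)` is divisible by
`tᵢ − tⱼ`. -/
def GKM (n : ℕ) (p : Perm (Fin n) → Pol n) : Prop :=
  ∀ (v : Perm (Fin n)) (i j : Fin n), i < j →
    (X i - X j : Pol n) ∣ (p v - p (Equiv.swap i j * v))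

/-- The length of a permutation: its number of inversions. -/
def len {n : ℕ} (w : Perm (Fin n)) : ℕ :=
  (Finset.univ.filter fun q : Fin n × Fin n => q.1 < q.2 ∧ w q.2 < w q.1).card

/-- Bruhat order: the partial order generated by `u < (i j) u` whenever `ℓ(u) < ℓ((i j)u)`. -/
def bruhatLE {n : ℕ} : Perm (Fin n) → Perm (Fin n) → Prop :=
  Relation.ReflTransGen
    (fun u v => (∃ i j : Fin n, i < j ∧ v = Equiv.swap i j * u) ∧ len u < len v)

/-- `p` is the canonical class (equivariant Schubert class) of `w`:
(i) each component is homogeneous of degree `ℓ(w)`; (ii) `p(v) = 0` unless `v ≥ w` in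
Bruhat order; (iii) `p(w) = ∏ (tᵢ − tⱼ)` over pairs `i < j` with `ℓ((i j)w) < ℓ(w)`;
and `p` satisfies the GKM conditions. -/
def IsCanonical {n : ℕ} (w : Perm (Fin n)) (p : Perm (Fin n) → Pol n) : Prop :=
  GKM n p ∧
  (∀ v, (p v).IsHomogeneous (len w)) ∧
  (∀ v, ¬ bruhatLE w v → p v = 0) ∧
  p w = ∏ q ∈ Finset.univ.filter
      (fun q : Fin n × Fin n => q.1 < q.2 ∧ len (Equiv.swap q.1 q.2 * w) < len w),
      (X q.1 - X q.2 : Pol n)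

/-- The simple transposition `sᵢ = (i, i+1)`. -/
def sT (n i : ℕ) (h : i + 1 < n) : Perm (Fin n) :=
  Equiv.swap ⟨i, Nat.lt_of_succ_lt h⟩ ⟨i + 1, h⟩

/-- The dot (left) action: `(w·p)(v) = w(p(w⁻¹ v))`. -/
def dot {n : ℕ} (w : Perm (Fin n)) (p : Perm (Fin n) → Pol n) : Perm (Fin n) → Pol n :=
  fun v => pact w (p (w⁻¹ * v))

/-- The star (right) action: `(p * w)(v) = p(vw)`. -/
def starAct {n : ℕ} (p : Perm (Fin n) → Pol n) (w : Perm (Fin n)) :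
    Perm (Fin n) → Pol n :=
  fun v => p (v * w)

/-- `R` as a `ℂ[t₁,…,tₙ]`-submodule of the product. -/
def gkmSubmodule (n : ℕ) : Submodule (Pol n) (Perm (Fin n) → Pol n) where
  carrier := {p | GKM n p}
  add_mem' := by
    intro a b ha hb v i j hij
    have h := dvd_add (ha v i j hij) (hb v i j hij)
    simpa [Pi.add_apply, add_sub_add_comm] using h
  zero_mem' := by
    intro v i j hij
    simp
  smul_mem' := by
    intro c p hp v i j hij
    have h := (hp v i j hij).mul_left c
    simpa [Pi.smul_apply, smul_eq_mul, mul_sub] using h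

/-- The maximal ideal `𝔪 = (t₁,…,tₙ) ⊆ ℂ[t₁,…,tₙ]`. -/
def mIdeal (n : ℕ) : Ideal (Pol n) := Ideal.span (Set.range (X : Fin n → Pol n))

/-- The submodule `𝔪R`: finite sums of products `c • p` with `c ∈ 𝔪` and `p ∈ R`. -/
def mR (n : ℕ) : Submodule (Pol n) (Perm (Fin n) → Pol n) :=
  Submodule.span (Pol n) {q | ∃ c ∈ mIdeal n, ∃ p, GKM n p ∧ q = c • p}

/-- The GKM condition for the moment graph of the regular semisimple Hessenberg variety
`X_h`: there is an edge between `v` and `(i j)v` iff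
`max(v⁻¹(i), v⁻¹(j)) ≤ h(min(v⁻¹(i), v⁻¹(j)))`. -/
def GKMh (n : ℕ) (h : Fin n → Fin n) (p : Perm (Fin n) → Pol n) : Prop :=
  ∀ (v : Perm (Fin n)) (i j : Fin n), i < j →
    max (v⁻¹ i) (v⁻¹ j) ≤ h (min (v⁻¹ i) (v⁻¹ j)) →
    (X i - X j : Pol n) ∣ (p v - p (Equiv.swap i j * v))

/-! Membership in `R_h` is a family of congruences `p(v) ≡ p((i j)v) mod (tᵢ − tⱼ)` along
the edges of the moment graph, and such congruences respect sums and products. For the dot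
action, `u` carries the edge between `u⁻¹v` and `(u⁻¹i u⁻¹j)u⁻¹v` to the edge between `v` and
`(i j)v`: since `u (a b) u⁻¹ = (u(a) u(b))`, both edges join the same positions
`v⁻¹(i), v⁻¹(j)`, and the substitution `u` sends `t_{u⁻¹i} − t_{u⁻¹j}` to `tᵢ − tⱼ`. -/

section DotAction

variable {n : ℕ}

lemma pact_pact (u w : Perm (Fin n)) (f : Pol n) : pact u (pact w f) = pact (u * w) f :=
  rename_rename _ _ f

lemma pact_one (f : Pol n) : pact 1 f = f :=
  rename_id_apply f

lemma dot_dot (u w : Perm (Fin n)) (p : Perm (Fin n) → Pol n) :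
    dot u (dot w p) = dot (u * w) p := by
  funext v
  simp only [dot, pact_pact, mul_inv_rev, mul_assoc]

lemma dot_one (p : Perm (Fin n) → Pol n) : dot 1 p = p := by
  funext v
  simp only [dot, pact_one, inv_one, one_mul]

lemma dot_inv_dot (u : Perm (Fin n)) (p : Perm (Fin n) → Pol n) : dot u⁻¹ (dot u p) = p := by
  rw [dot_dot, inv_mul_cancel, dot_one]

lemma dot_dot_inv (u : Perm (Fin n)) (p : Perm (Fin n) → Pol n) : dot u (dot u⁻¹ p) = p := by
  rw [dot_dot, mul_inv_cancel, dot_one]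

lemma dot_add (u : Perm (Fin n)) (p q : Perm (Fin n) → Pol n) :
    dot u (p + q) = dot u p + dot u q := by
  funext v
  exact map_add (rename ⇑u) _ _

lemma dot_mul (u : Perm (Fin n)) (p q : Perm (Fin n) → Pol n) :
    dot u (p * q) = dot u p * dot u q := by
  funext v
  exact map_mul (rename ⇑u) _ _

lemma dot_smul (u : Perm (Fin n)) (c : Pol n) (p : Perm (Fin n) → Pol n) :
    dot u (c • p) = pact u c • dot u p := by
  funext v
  exact map_mul (rename ⇑u) _ _

lemma inv_mul_swap_mul (u v : Perm (Fin n)) (i j : Fin n) :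
    u⁻¹ * (swap i j * v) = swap (u⁻¹ i) (u⁻¹ j) * (u⁻¹ * v) := by
  rw [swap_apply_apply]
  group

end DotAction

namespace GKMh

variable {n : ℕ} {h : Fin n → Fin n} {p q : Perm (Fin n) → Pol n}

lemma const (c : Pol n) : GKMh n h (fun _ => c) := by
  intro v i j _ _
  simp

lemma add (hp : GKMh n h p) (hq : GKMh n h q) : GKMh n h (p + q) := by
  intro v i j hij hedge
  simpa only [Pi.add_apply, add_sub_add_comm] using
    dvd_add (hp v i j hij hedge) (hq v i j hij hedge)

lemma mul (hp : GKMh n h p) (hq : GKMh n h q) : GKMh n h (p * q) :=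
  fun v i j hij hedge => dvd_mul_sub_mul (hp v i j hij hedge) (hq v i j hij hedge)

lemma dvd_sub_of_ne (hp : GKMh n h p) (v : Perm (Fin n)) {i j : Fin n} (hij : i ≠ j)
    (hedge : max (v⁻¹ i) (v⁻¹ j) ≤ h (min (v⁻¹ i) (v⁻¹ j))) :
    (X i - X j : Pol n) ∣ p v - p (swap i j * v) := by
  rcases hij.lt_or_gt with hlt | hgt
  · exact hp v i j hlt hedge
  · rw [max_comm, min_comm] at hedge
    rw [swap_comm, ← neg_sub, neg_dvd]
    exact hp v j i hgt hedge

lemma dot (hp : GKMh n h p) (u : Perm (Fin n)) : GKMh n h (dot u p) := by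
  intro v i j hij hedge
  have hpos : ∀ x, (u⁻¹ * v)⁻¹ (u⁻¹ x) = v⁻¹ x := fun x => by simp
  have hdvd := hp.dvd_sub_of_ne (u⁻¹ * v) (u⁻¹.injective.ne hij.ne) (by rwa [hpos, hpos])
  rw [← inv_mul_swap_mul] at hdvd
  simpa only [_root_.dot, pact, map_sub, rename_X, Perm.coe_inv, apply_symm_apply]
    using map_dvd (rename (R := ℂ) ⇑u) hdvd

lemma existsUnique_dot_eq (hq : GKMh n h q) (u : Perm (Fin n)) :
    ∃! p, GKMh n h p ∧ _root_.dot u p = q :=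
  ⟨_root_.dot u⁻¹ q, ⟨hq.dot u⁻¹, dot_dot_inv u q⟩, by
    rintro p ⟨-, rfl⟩
    exact (dot_inv_dot u p).symm⟩

end GKMh

theorem hessenberg_dot_action_general (n : ℕ)
    (h : Fin n → Fin n) :
    (∀ c : Pol n, GKMh n h (fun _ => c)) ∧
    (∀ p q, GKMh n h p → GKMh n h q → GKMh n h (p + q)) ∧
    (∀ p q, GKMh n h p → GKMh n h q → GKMh n h (p * q)) ∧
    (∀ (u : Perm (Fin n)) (p), GKMh n h p → GKMh n h (dot u p)) ∧
    (∀ (u : Perm (Fin n)) (p q : Perm (Fin n) → Pol n),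
      dot u (p + q) = dot u p + dot u q) ∧
    (∀ (u : Perm (Fin n)) (p q : Perm (Fin n) → Pol n),
      dot u (p * q) = dot u p * dot u q) ∧
    (∀ (u : Perm (Fin n)) (c : Pol n) (p : Perm (Fin n) → Pol n),
      dot u (c • p) = pact u c • dot u p) ∧
    (∀ (u : Perm (Fin n)) (q), GKMh n h q → ∃! p, GKMh n h p ∧ dot u p = q) ∧
    (∀ (u w : Perm (Fin n)) (p : Perm (Fin n) → Pol n),
      dot u (dot w p) = dot (u * w) p) :=
  ⟨GKMh.const, fun _ _ => GKMh.add, fun _ _ => GKMh.mul, fun u _ hp => hp.dot u, dot_add,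
    dot_mul, dot_smul, fun u _ hq => hq.existsUnique_dot_eq u, dot_dot⟩

/-- for a Hessenberg function `h`, the Hessenberg GKM ring `R_h` is a
`ℂ[t₁,…,tₙ]`-subalgebra of the product ring (contains the diagonal scalars and is closed
under addition and multiplication), the dot action preserves `R_h`, and it acts by
twisted `ℂ[t₁,…,tₙ]`-algebra automorphisms, giving a left action of `Sₙ` on `R_h`. -/
theorem hessenberg_dot_action (n : ℕ) (hn : 1 ≤ n)
    (h : Fin n → Fin n) (hmono : Monotone h) (hup : ∀ i, i ≤ h i) :
    (∀ c : Pol n, GKMh n h (fun _ => c)) ∧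
    (∀ p q, GKMh n h p → GKMh n h q → GKMh n h (p + q)) ∧
    (∀ p q, GKMh n h p → GKMh n h q → GKMh n h (p * q)) ∧
    (∀ (u : Perm (Fin n)) (p), GKMh n h p → GKMh n h (dot u p)) ∧
    (∀ (u : Perm (Fin n)) (p q : Perm (Fin n) → Pol n),
      dot u (p + q) = dot u p + dot u q) ∧
    (∀ (u : Perm (Fin n)) (p q : Perm (Fin n) → Pol n),
      dot u (p * q) = dot u p * dot u q) ∧
    (∀ (u : Perm (Fin n)) (c : Pol n) (p : Perm (Fin n) → Pol n),
      dot u (c • p) = pact u c • dot u p) ∧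
    (∀ (u : Perm (Fin n)) (q), GKMh n h q → ∃! p, GKMh n h p ∧ dot u p = q) ∧
    (∀ (u w : Perm (Fin n)) (p : Perm (Fin n) → Pol n),
      dot u (dot w p) = dot (u * w) p) :=
  hessenberg_dot_action_general n h
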